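/- Let d ≥ 1 and let ρ be a density matrix on ℂ^d. Then ρ is a maximally coherent state (i.e., for every density matrix σ on ℂ^d there exists an incoherent Kraus family (K_n) with ∑_n K_n ρ K_nᴴ = σ) if and only if ρ belongs to S_MCS. -/

import Mathlib

open Matrix BigOperators
open scoped ComplexOrder

noncomputable section

/-- A density matrix on ℂ^d: positive semidefinite with trace 1. -/
def IsDensityMatrix {d : ℕ} (ρ : Matrix (Fin d) (Fin d) ℂ) : Prop :=
  ρ.PosSemidef ∧ ρ.trace = 1

/-- An incoherent Kraus family: completeness relation plus each Kraus operator
maps diagonal density matrices to diagonal matrices. -/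
def IsIncoherentKraus {d : ℕ} {ι : Type} [Fintype ι]
    (K : ι → Matrix (Fin d) (Fin d) ℂ) : Prop :=
  (∑ n, (K n)ᴴ * K n = 1) ∧
  ∀ D : Matrix (Fin d) (Fin d) ℂ, IsDensityMatrix D → D.IsDiag →
    ∀ n, ((K n) * D * (K n)ᴴ).IsDiag

/-- A unitary incoherent matrix: unitary and U D Uᴴ diagonal for every diagonal
density matrix D. -/
def IsUnitaryIncoherent {d : ℕ} (U : Matrix (Fin d) (Fin d) ℂ) : Prop :=
  U * Uᴴ = 1 ∧ Uᴴ * U = 1 ∧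
  ∀ D : Matrix (Fin d) (Fin d) ℂ, IsDensityMatrix D → D.IsDiag → (U * D * Uᴴ).IsDiag

/-- S_MCS: rank-one projections onto unit vectors whose coordinates all have
modulus 1/√d. -/
def InSMCS {d : ℕ} (ρ : Matrix (Fin d) (Fin d) ℂ) : Prop :=
  ∃ ψ : Fin d → ℂ, (∑ j, ‖ψ j‖ ^ 2 = 1) ∧
    (∀ j, ‖ψ j‖ = 1 / Real.sqrt d) ∧
    ρ = Matrix.vecMulVec ψ (star ψ)

/-- A valid coherence measure: (C1) nonnegativity and vanishing exactly on diagonal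
(incoherent) states; (C2) monotonicity under incoherent operations; (C3) monotonicity
on average under subselection; (C4) convexity. -/
def IsValidCoherenceMeasure {d : ℕ} (C : Matrix (Fin d) (Fin d) ℂ → ℝ) : Prop :=
  (∀ ρ, IsDensityMatrix ρ → 0 ≤ C ρ) ∧
  (∀ ρ, IsDensityMatrix ρ → (C ρ = 0 ↔ ρ.IsDiag)) ∧
  (∀ ρ, IsDensityMatrix ρ → ∀ (N : ℕ) (K : Fin N → Matrix (Fin d) (Fin d) ℂ),
    IsIncoherentKraus K → C (∑ n, K n * ρ * (K n)ᴴ) ≤ C ρ) ∧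
  (∀ ρ, IsDensityMatrix ρ → ∀ (N : ℕ) (K : Fin N → Matrix (Fin d) (Fin d) ℂ),
    IsIncoherentKraus K →
    ∑ n ∈ Finset.univ.filter
        (fun n => 0 < (Matrix.trace (K n * ρ * (K n)ᴴ)).re),
      (Matrix.trace (K n * ρ * (K n)ᴴ)).re *
        C ((((Matrix.trace (K n * ρ * (K n)ᴴ)).re : ℂ))⁻¹ • (K n * ρ * (K n)ᴴ)) ≤ C ρ) ∧
  (∀ (M : ℕ) (q : Fin M → ℝ) (ρs : Fin M → Matrix (Fin d) (Fin d) ℂ),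
    (∀ k, 0 ≤ q k) → (∑ k, q k = 1) → (∀ k, IsDensityMatrix (ρs k)) →
    C (∑ k, (q k : ℂ) • ρs k) ≤ ∑ k, q k * C (ρs k))

/-! An incoherent Kraus operator is exactly a matrix with at most one nonzero entry per column.

(⇒) Write `ρ = s sᴴ` and let `ρ` reach the uniform state `P = |+⟩⟨+|` through Kraus operators
`Kₙ`. Since `P (eᵢ - eᵢ') = 0`, every `Kₙ s` has all its rows equal. A matrix with at most one
nonzero entry per column and no zero row is a generalized permutation matrix; for an `n` with
`Kₙ s ≠ 0` this makes `Kₙ` invertible, so `s`, and hence `ρ`, has rank one. Comparing, column by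
column, a row of `Kₙ s` with the completeness relation gives `ρⱼⱼ ≥ 1/d` for every `j`, and
`tr ρ = 1` forces equality.

(⇐) For `ψ` with `|ψⱼ| = 1/√d` and `σ = t tᴴ`, the operators
`diagonal (t.col k) * (cyclic shift by n) * diagonal (√d ψ̄)`, `k n : Fin d`, are incoherent and
complete, and each maps `ψψᴴ` to `(t.col k)(t.col k)ᴴ / d`. -/

open scoped MatrixOrder

def HasMonomialColumns {m n α : Type*} [Zero α] (K : Matrix m n α) : Prop :=
  ∀ j i i', K i j ≠ 0 → K i' j ≠ 0 → i = i'

section MonomialColumns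

variable {n α : Type*} [Fintype n] {K : Matrix n n α}

theorem exists_ne_zero_of_mulVec_apply_ne_zero [NonUnitalNonAssocSemiring α] {v : n → α}
    {i : n} (h : (K *ᵥ v) i ≠ 0) : ∃ l, K i l ≠ 0 := by
  obtain ⟨l, -, hl⟩ := Finset.exists_ne_zero_of_sum_ne_zero h
  exact ⟨l, left_ne_zero_of_mul hl⟩

theorem HasMonomialColumns.exists_row_mulVec_eq [NonUnitalNonAssocSemiring α]
    (hK : HasMonomialColumns K) (hrow : ∀ i, ∃ l, K i l ≠ 0) (j : n) :
    ∃ r, K r j ≠ 0 ∧ ∀ x, (K *ᵥ x) r = K r j * x j := by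
  choose g hg using hrow
  -- no column meets two rows, so `g` is injective, hence bijective
  have hg_surj : g.Surjective :=
    Finite.injective_iff_surjective.mp fun i i' h => hK (g i) i i' (hg i) (h ▸ hg i')
  obtain ⟨r, rfl⟩ := hg_surj j
  refine ⟨r, hg r, fun x => Fintype.sum_eq_single (g r) fun l hl => ?_⟩
  obtain ⟨r', rfl⟩ := hg_surj l
  have : K r (g r') = 0 := by
    by_contra h
    exact hl (congrArg g (hK _ r' r (hg r') h))
  simp [this]

theorem HasMonomialColumns.isUnit [Field α] [DecidableEq n] (hK : HasMonomialColumns K)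
    (hrow : ∀ i, ∃ l, K i l ≠ 0) : IsUnit K := by
  refine mulVec_injective_iff_isUnit.mp fun x y hxy => funext fun j => ?_
  obtain ⟨r, hr, hKr⟩ := hK.exists_row_mulVec_eq hrow j
  have := congrFun hxy r
  rw [hKr, hKr] at this
  exact mul_left_cancel₀ hr this

theorem HasMonomialColumns.norm_sq_le_of_mulVec_eq_const [NormedField α]
    (hK : HasMonomialColumns K) {v : n → α} {w : α} (hKv : ∀ i, (K *ᵥ v) i = w) (j : n) :
    ‖w‖ ^ 2 ≤ (∑ i, ‖K i j‖ ^ 2) * ‖v j‖ ^ 2 := by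
  rcases eq_or_ne w 0 with rfl | hw
  · rw [norm_zero, sq, zero_mul]
    positivity
  obtain ⟨r, -, hKr⟩ := hK.exists_row_mulVec_eq
    (fun i => exists_ne_zero_of_mulVec_apply_ne_zero ((hKv i).trans_ne hw)) j
  calc ‖w‖ ^ 2 = ‖K r j‖ ^ 2 * ‖v j‖ ^ 2 := by rw [← hKv r, hKr, norm_mul, mul_pow]
    _ ≤ (∑ i, ‖K i j‖ ^ 2) * ‖v j‖ ^ 2 := by
      gcongr
      exact Finset.single_le_sum (f := fun i => ‖K i j‖ ^ 2) (fun i _ => by positivity)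
        (Finset.mem_univ r)

end MonomialColumns

theorem mul_conjTranspose_self_apply_self {m n : Type*} [Fintype n] (A : Matrix m n ℂ)
    (i : m) : (A * Aᴴ) i i = ((∑ k, ‖A i k‖ ^ 2 : ℝ) : ℂ) := by
  simp [mul_apply, Complex.mul_conj, Complex.normSq_eq_norm_sq]

theorem conjTranspose_mul_self_apply_self {m n : Type*} [Fintype m] (A : Matrix m n ℂ)
    (j : n) : (Aᴴ * A) j j = ((∑ i, ‖A i j‖ ^ 2 : ℝ) : ℂ) := by
  simp [mul_apply, Complex.conj_mul']

theorem star_dotProduct_mul_conjTranspose_mulVec {𝕜 m n : Type*} [RCLike 𝕜] [Fintype m]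
    [Fintype n] (A : Matrix m n 𝕜) (w : m → 𝕜) :
    star w ⬝ᵥ (A * Aᴴ) *ᵥ w = star (Aᴴ *ᵥ w) ⬝ᵥ (Aᴴ *ᵥ w) := by
  rw [← mulVec_mulVec, dotProduct_mulVec, star_mulVec, conjTranspose_conjTranspose]

theorem rows_eq_of_sum_mul_conjTranspose_eq_const {𝕜 m n ι : Type*} [RCLike 𝕜] [Fintype m]
    [Fintype n] [DecidableEq m] [Fintype ι] {M : ι → Matrix m n 𝕜} {c : 𝕜}
    (h : ∑ a, M a * (M a)ᴴ = of fun _ _ => c) (a : ι) (i i' : m) (k : n) :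
    M a i k = M a i' k := by
  have hw (A : Matrix m m 𝕜) : A *ᵥ (Pi.single i 1 - Pi.single i' 1) = A.col i - A.col i' := by
    rw [mulVec_sub, mulVec_single_one, mulVec_single_one]
  have hzero : star (Pi.single i 1 - Pi.single i' 1) ⬝ᵥ
      (∑ a, M a * (M a)ᴴ) *ᵥ (Pi.single i 1 - Pi.single i' 1) = 0 := by
    rw [hw, h, show (of fun _ _ => c : Matrix m m 𝕜).col i - (of fun _ _ => c).col i' = 0
      from sub_self _, dotProduct_zero]
  simp only [sum_mulVec, dotProduct_sum, star_dotProduct_mul_conjTranspose_mulVec] at hzero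
  have ha := (Finset.sum_eq_zero_iff_of_nonneg fun a _ => dotProduct_star_self_nonneg _).mp hzero a
    (Finset.mem_univ a)
  have hk := congrFun (dotProduct_star_self_eq_zero.mp ha) k
  rw [mulVec_sub, mulVec_single_one, mulVec_single_one] at hk
  exact (starRingEnd 𝕜).injective (by simpa [sub_eq_zero] using hk)

theorem mul_vecMulVec_mul_conjTranspose {m n : Type*} [Fintype n] (K : Matrix m n ℂ)
    (ψ : n → ℂ) : K * vecMulVec ψ (star ψ) * Kᴴ = vecMulVec (K *ᵥ ψ) (star (K *ᵥ ψ)) := by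
  rw [mul_vecMulVec, vecMulVec_mul, star_mulVec]

theorem exists_vecMulVec_mul_conjTranspose_eq {m n : Type*} [Fintype n] (c : m → ℂ)
    (x : n → ℂ) : ∃ ψ : m → ℂ, vecMulVec c x * (vecMulVec c x)ᴴ = vecMulVec ψ (star ψ) := by
  refine ⟨((√(∑ k, ‖x k‖ ^ 2) : ℝ) : ℂ) • c, ?_⟩
  ext i i'
  have hS : ((√(∑ k, ‖x k‖ ^ 2) : ℝ) : ℂ) * ((√(∑ k, ‖x k‖ ^ 2) : ℝ) : ℂ) =
      ∑ k, x k * starRingEnd ℂ (x k) := by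
    rw [← Complex.ofReal_mul, Real.mul_self_sqrt (by positivity)]
    simp [Complex.mul_conj']
  simp only [mul_apply, conjTranspose_apply, vecMulVec_apply, Pi.smul_apply, Pi.star_apply,
    star_mul', smul_eq_mul, Complex.star_def, Complex.conj_ofReal]
  calc _ = c i * starRingEnd ℂ (c i') * ∑ k, x k * starRingEnd ℂ (x k) := by
        rw [Finset.mul_sum]
        exact Finset.sum_congr rfl fun k _ => by ring
    _ = _ := by rw [← hS]; ring

theorem Matrix.PosSemidef.exists_eq_mul_conjTranspose {n : Type*} [Fintype n] [DecidableEq n]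
    {A : Matrix n n ℂ} (hA : A.PosSemidef) : ∃ s : Matrix n n ℂ, A = s * sᴴ := by
  obtain ⟨B, rfl⟩ := CStarAlgebra.nonneg_iff_eq_star_mul_self.mp hA.nonneg
  exact ⟨Bᴴ, by rw [star_eq_conjTranspose, conjTranspose_conjTranspose]⟩

theorem isDensityMatrix_diagonal_single {d : ℕ} (j : Fin d) :
    IsDensityMatrix (diagonal (Pi.single j (1 : ℂ))) := by
  refine ⟨posSemidef_diagonal_iff.mpr fun i => ?_, by simp [trace_diagonal]⟩
  by_cases h : i = j <;> simp [h]

theorem incoherent_iff_hasMonomialColumns {d : ℕ} (K : Matrix (Fin d) (Fin d) ℂ) :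
    (∀ D : Matrix (Fin d) (Fin d) ℂ, IsDensityMatrix D → D.IsDiag → (K * D * Kᴴ).IsDiag) ↔
      HasMonomialColumns K := by
  have hconj (v : Fin d → ℂ) (i i' : Fin d) :
      (K * diagonal v * Kᴴ) i i' = ∑ j, K i j * v j * star (K i' j) := by
    rw [mul_apply]
    simp only [mul_diagonal, conjTranspose_apply]
  constructor
  · intro h j i i' hi hi'
    by_contra hne
    have : (K * diagonal (Pi.single j (1 : ℂ)) * Kᴴ) i i' = 0 :=
      h _ (isDensityMatrix_diagonal_single j) (isDiag_diagonal _) hne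
    rw [hconj, Fintype.sum_eq_single j fun l hl => by simp [hl]] at this
    simp_all
  · intro h D _ hD i i' hne
    rw [← hD.diagonal_diag, hconj]
    refine Finset.sum_eq_zero fun j _ => ?_
    by_cases hi : K i j = 0
    · simp [hi]
    by_cases hi' : K i' j = 0
    · simp [hi']
    exact absurd (h j i i' hi hi') hne

theorem IsIncoherentKraus.hasMonomialColumns {d : ℕ} {ι : Type} [Fintype ι]
    {K : ι → Matrix (Fin d) (Fin d) ℂ} (hK : IsIncoherentKraus K) (n : ι) :
    HasMonomialColumns (K n) :=
  (incoherent_iff_hasMonomialColumns (K n)).mp fun D hD hdiag => hK.2 D hD hdiag n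

theorem IsIncoherentKraus.sum_norm_sq_column {d : ℕ} {ι : Type} [Fintype ι]
    {K : ι → Matrix (Fin d) (Fin d) ℂ} (hK : IsIncoherentKraus K) (j : Fin d) :
    ∑ n, ∑ i, ‖K n i j‖ ^ 2 = 1 := by
  have := congrFun (congrFun hK.1 j) j
  simp only [Matrix.sum_apply, conjTranspose_mul_self_apply_self, one_apply_eq] at this
  exact_mod_cast this

theorem exists_fin_of_isIncoherentKraus {d : ℕ} {ι : Type} [Fintype ι]
    {K : ι → Matrix (Fin d) (Fin d) ℂ} (hK : IsIncoherentKraus K)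
    {ρ σ : Matrix (Fin d) (Fin d) ℂ} (hKρ : ∑ n, K n * ρ * (K n)ᴴ = σ) :
    ∃ (N : ℕ) (K' : Fin N → Matrix (Fin d) (Fin d) ℂ),
      IsIncoherentKraus K' ∧ ∑ n, K' n * ρ * (K' n)ᴴ = σ := by
  let e := Fintype.equivFin ι
  refine ⟨Fintype.card ι, K ∘ e.symm, ⟨?_, fun D hD hdiag n => hK.2 D hD hdiag _⟩, ?_⟩
  · rw [← hK.1]
    exact e.symm.sum_comp fun n => (K n)ᴴ * K n
  · rw [← hKρ]
    exact e.symm.sum_comp fun n => K n * ρ * (K n)ᴴ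

theorem IsDensityMatrix.neZero {d : ℕ} {ρ : Matrix (Fin d) (Fin d) ℂ} (hρ : IsDensityMatrix ρ) :
    NeZero d := by
  refine ⟨fun hd => ?_⟩
  subst hd
  simpa using hρ.2

def uniformState (d : ℕ) : Matrix (Fin d) (Fin d) ℂ := of fun _ _ => (d : ℂ)⁻¹

theorem isDensityMatrix_uniformState {d : ℕ} [NeZero d] : IsDensityMatrix (uniformState d) := by
  have hd : (d : ℝ) ≠ 0 := NeZero.ne _
  have : uniformState d =
      vecMulVec (fun _ => ((√d : ℝ) : ℂ)⁻¹) (star fun _ => ((√d : ℝ) : ℂ)⁻¹) := by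
    ext
    simp [uniformState, vecMulVec_apply, ← mul_inv, ← Complex.ofReal_mul]
  refine ⟨this ▸ posSemidef_vecMulVec_self_star _, ?_⟩
  simp [uniformState, trace]

theorem inSMCS_iff {d : ℕ} [NeZero d] {ρ : Matrix (Fin d) (Fin d) ℂ} :
    InSMCS ρ ↔ ∃ ψ : Fin d → ℂ, (∀ j, ‖ψ j‖ ^ 2 = (d : ℝ)⁻¹) ∧ ρ = vecMulVec ψ (star ψ) := by
  have hd : (0 : ℝ) < d := Nat.cast_pos.mpr (NeZero.pos d)
  constructor
  · rintro ⟨ψ, -, hψ, rfl⟩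
    exact ⟨ψ, fun j => by rw [hψ j, div_pow, Real.sq_sqrt hd.le, one_pow, one_div], rfl⟩
  · rintro ⟨ψ, hψ, rfl⟩
    refine ⟨ψ, by simp [hψ, hd.ne'], fun j => ?_, rfl⟩
    rw [← Real.sqrt_sq (norm_nonneg (ψ j)), hψ j, Real.sqrt_inv, one_div]

section Forward

variable {d N : ℕ} {K : Fin N → Matrix (Fin d) (Fin d) ℂ} {s : Matrix (Fin d) (Fin d) ℂ}

theorem sum_norm_sq_mul_apply_eq_inv (hs : ∑ n, K n * s * (K n * s)ᴴ = uniformState d)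
    (i : Fin d) : ∑ n, ∑ k, ‖(K n * s) i k‖ ^ 2 = (d : ℝ)⁻¹ := by
  have := congrFun (congrFun hs i) i
  simp only [Matrix.sum_apply, mul_conjTranspose_self_apply_self, uniformState, of_apply] at this
  rw [← Complex.ofReal_sum, ← Complex.ofReal_natCast, ← Complex.ofReal_inv] at this
  exact Complex.ofReal_injective this

theorem inv_le_sum_norm_sq_row (hK : IsIncoherentKraus K)
    (hs : ∑ n, K n * s * (K n * s)ᴴ = uniformState d) (j : Fin d) :
    (d : ℝ)⁻¹ ≤ ∑ k, ‖s j k‖ ^ 2 := by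
  have hrows := rows_eq_of_sum_mul_conjTranspose_eq_const hs
  calc (d : ℝ)⁻¹ = ∑ n, ∑ k, ‖(K n * s) j k‖ ^ 2 := (sum_norm_sq_mul_apply_eq_inv hs j).symm
    _ ≤ ∑ n, ∑ k, (∑ i, ‖K n i j‖ ^ 2) * ‖s j k‖ ^ 2 := by
        gcongr with n _ k _
        exact (hK.hasMonomialColumns n).norm_sq_le_of_mulVec_eq_const (v := fun l => s l k)
          (fun i => hrows n i j k) j
    _ = ∑ k, ‖s j k‖ ^ 2 := by
        rw [Finset.sum_comm]
        simp_rw [← Finset.sum_mul, hK.sum_norm_sq_column j, one_mul]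

theorem exists_mul_conjTranspose_eq_vecMulVec [NeZero d] (hK : IsIncoherentKraus K)
    (hs : ∑ n, K n * s * (K n * s)ᴴ = uniformState d) :
    ∃ ψ : Fin d → ℂ, s * sᴴ = vecMulVec ψ (star ψ) := by
  have hrows := rows_eq_of_sum_mul_conjTranspose_eq_const hs
  obtain ⟨n₀, k₀, hne⟩ : ∃ n k, (K n * s) 0 k ≠ 0 := by
    by_contra! h
    have := sum_norm_sq_mul_apply_eq_inv hs 0
    simp [h] at this
    exact NeZero.ne d (by exact_mod_cast this.symm)
  have hunit : IsUnit (K n₀) := (hK.hasMonomialColumns n₀).isUnit fun i =>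
    exists_ne_zero_of_mulVec_apply_ne_zero (v := fun l => s l k₀)
      ((hrows n₀ i 0 k₀).trans_ne hne)
  have hM : K n₀ * s = vecMulVec 1 ((K n₀ * s) 0) := by
    ext i k
    simp [vecMulVec_apply, hrows n₀ i 0 k]
  have : s = vecMulVec ((K n₀)⁻¹ *ᵥ 1) ((K n₀ * s) 0) := by
    rw [← mul_vecMulVec, ← hM,
      nonsing_inv_mul_cancel_left _ s ((isUnit_iff_isUnit_det _).mp hunit)]
  rw [this]
  exact exists_vecMulVec_mul_conjTranspose_eq _ _

theorem inSMCS_mul_conjTranspose (hK : IsIncoherentKraus K)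
    (hs : ∑ n, K n * s * (K n * s)ᴴ = uniformState d) (htr : (s * sᴴ).trace = 1) :
    InSMCS (s * sᴴ) := by
  have : NeZero d := IsDensityMatrix.neZero ⟨posSemidef_self_mul_conjTranspose s, htr⟩
  have hrow (j : Fin d) : ∑ k, ‖s j k‖ ^ 2 = (d : ℝ)⁻¹ := by
    have htr' : ∑ _j : Fin d, (d : ℝ)⁻¹ = ∑ j, ∑ k, ‖s j k‖ ^ 2 := by
      simp only [trace, diag_apply, mul_conjTranspose_self_apply_self] at htr
      simp only [Finset.sum_const, Finset.card_univ, Fintype.card_fin, nsmul_eq_mul]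
      rw [mul_inv_cancel₀ (NeZero.ne _)]
      exact_mod_cast htr.symm
    exact ((Finset.sum_eq_sum_iff_of_le fun j _ => inv_le_sum_norm_sq_row hK hs j).mp htr' j
      (Finset.mem_univ j)).symm
  obtain ⟨ψ, hψ⟩ := exists_mul_conjTranspose_eq_vecMulVec hK hs
  refine inSMCS_iff.mpr ⟨ψ, fun j => ?_, hψ⟩
  have := congrFun (congrFun hψ j) j
  rw [mul_conjTranspose_self_apply_self, hrow, vecMulVec_apply, Pi.star_apply,
    Complex.star_def, Complex.mul_conj'] at this
  exact_mod_cast this.symm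

end Forward

theorem inSMCS_of_sum_eq_uniformState {d N : ℕ} {ρ : Matrix (Fin d) (Fin d) ℂ}
    (hρ : IsDensityMatrix ρ) {K : Fin N → Matrix (Fin d) (Fin d) ℂ} (hK : IsIncoherentKraus K)
    (hKρ : ∑ n, K n * ρ * (K n)ᴴ = uniformState d) : InSMCS ρ := by
  obtain ⟨s, rfl⟩ := hρ.1.exists_eq_mul_conjTranspose
  refine inSMCS_mul_conjTranspose hK ?_ hρ.2
  simpa only [conjTranspose_mul, Matrix.mul_assoc] using hKρ

section Shift

variable {d : ℕ} [NeZero d]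

def shiftKraus (a b : Fin d → ℂ) (n : Fin d) : Matrix (Fin d) (Fin d) ℂ :=
  of fun i j => if i = j + n then a i * b j else 0

omit [NeZero d] in
theorem hasMonomialColumns_shiftKraus (a b : Fin d → ℂ) (n : Fin d) :
    HasMonomialColumns (shiftKraus a b n) := by
  intro j i i' hi hi'
  simp only [shiftKraus, of_apply, ne_eq, ite_eq_right_iff, not_forall] at hi hi'
  exact hi.1.trans hi'.1.symm

theorem shiftKraus_mulVec (a b : Fin d → ℂ) (n : Fin d) {v : Fin d → ℂ} {c : ℂ}
    (hbv : ∀ j, b j * v j = c) : shiftKraus a b n *ᵥ v = c • a := by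
  ext i
  simp only [mulVec, dotProduct, shiftKraus, of_apply, ite_mul, zero_mul, Pi.smul_apply,
    smul_eq_mul]
  rw [Fintype.sum_eq_single (i - n) fun j hj => if_neg fun h => hj (eq_sub_of_add_eq h.symm),
    if_pos (sub_add_cancel i n).symm, mul_assoc, hbv, mul_comm]

theorem sum_conjTranspose_mul_shiftKraus (a b : Fin d → ℂ) :
    ∑ n, (shiftKraus a b n)ᴴ * shiftKraus a b n =
      diagonal fun j => ((∑ i, ‖a i‖ ^ 2 : ℝ) : ℂ) * ((‖b j‖ ^ 2 : ℝ) : ℂ) := by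
  have hentry (n l l' : Fin d) : ((shiftKraus a b n)ᴴ * shiftKraus a b n) l l' =
      if l = l' then ((‖a (l + n)‖ ^ 2 : ℝ) : ℂ) * ((‖b l‖ ^ 2 : ℝ) : ℂ) else 0 := by
    rw [mul_apply, Fintype.sum_eq_single (l + n) fun i hi => by simp [shiftKraus, hi]]
    simp only [conjTranspose_apply, shiftKraus, of_apply, if_true, add_left_inj]
    split_ifs with h
    · subst h
      simp only [star_mul', Complex.star_def, Complex.ofReal_pow, ← Complex.conj_mul']
      ring
    · exact mul_zero _
  ext l l'
  simp only [Matrix.sum_apply, hentry, diagonal_apply]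
  split_ifs with h
  · rw [← Finset.sum_mul, ← Complex.ofReal_sum]
    congr 2
    exact Equiv.sum_comp (Equiv.addLeft l) fun i => ‖a i‖ ^ 2
  · simp

end Shift

theorem exists_incoherentKraus_eq_mul_conjTranspose {d : ℕ} [NeZero d] {ψ : Fin d → ℂ}
    (hψ : ∀ j, ‖ψ j‖ ^ 2 = (d : ℝ)⁻¹) (t : Matrix (Fin d) (Fin d) ℂ)
    (htr : (t * tᴴ).trace = 1) :
    ∃ (N : ℕ) (K : Fin N → Matrix (Fin d) (Fin d) ℂ),
      IsIncoherentKraus K ∧ ∑ n, K n * vecMulVec ψ (star ψ) * (K n)ᴴ = t * tᴴ := by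
  have hd : (0 : ℝ) < d := Nat.cast_pos.mpr (NeZero.pos d)
  set b : Fin d → ℂ := fun j => ((√d : ℝ) : ℂ) * star (ψ j)
  have hb (j : Fin d) : ‖b j‖ ^ 2 = 1 := by
    simp [b, mul_pow, hψ, Real.sq_sqrt hd.le, hd.ne']
  have hbψ (j : Fin d) : b j * ψ j = (((√d)⁻¹ : ℝ) : ℂ) := by
    simp only [b, mul_assoc, Complex.star_def, Complex.conj_mul', ← Complex.ofReal_pow, hψ,
      ← Complex.ofReal_mul]
    congr 1
    field_simp
    rw [Real.sq_sqrt hd.le]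
  refine exists_fin_of_isIncoherentKraus
    (K := fun p : Fin d × Fin d => shiftKraus (t.col p.1) b p.2)
    ⟨?_, fun D hD hdiag p => (incoherent_iff_hasMonomialColumns _).mpr
      (hasMonomialColumns_shiftKraus _ _ _) D hD hdiag⟩ ?_
  · rw [Fintype.sum_prod_type]
    simp only [sum_conjTranspose_mul_shiftKraus, hb, Complex.ofReal_one, mul_one]
    ext l l'
    rw [Matrix.sum_apply]
    simp only [diagonal_apply, one_apply]
    split_ifs
    · rw [← Complex.ofReal_sum, Finset.sum_comm]
      simp only [trace, diag_apply, mul_conjTranspose_self_apply_self] at htr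
      exact_mod_cast htr
    · simp
  · rw [Fintype.sum_prod_type]
    simp only [mul_vecMulVec_mul_conjTranspose, shiftKraus_mulVec _ _ _ hbψ, Finset.sum_const]
    have hc : (d : ℂ) * ((((√d)⁻¹ : ℝ) : ℂ) * star (((√d)⁻¹ : ℝ) : ℂ)) = 1 := by
      rw [Complex.star_def, Complex.conj_ofReal, ← Complex.ofReal_mul, ← mul_inv,
        Real.mul_self_sqrt hd.le, Complex.ofReal_inv, Complex.ofReal_natCast,
        mul_inv_cancel₀ (NeZero.ne _)]
    ext i i'
    simp only [Matrix.sum_apply, Matrix.smul_apply, vecMulVec_apply, mul_apply,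
      Finset.card_univ, Fintype.card_fin, Pi.star_apply, Pi.smul_apply, smul_eq_mul, star_mul',
      conjTranspose_apply, col_apply]
    refine Finset.sum_congr rfl fun k _ => ?_
    simp only [nsmul_eq_mul]
    linear_combination t i k * star (t i' k) * hc

theorem exists_incoherentKraus_of_inSMCS {d : ℕ} [NeZero d] {ρ σ : Matrix (Fin d) (Fin d) ℂ}
    (hρ : InSMCS ρ) (hσ : IsDensityMatrix σ) :
    ∃ (N : ℕ) (K : Fin N → Matrix (Fin d) (Fin d) ℂ),
      IsIncoherentKraus K ∧ ∑ n, K n * ρ * (K n)ᴴ = σ := by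
  obtain ⟨ψ, hψ, rfl⟩ := inSMCS_iff.mp hρ
  obtain ⟨t, rfl⟩ := hσ.1.exists_eq_mul_conjTranspose
  exact exists_incoherentKraus_eq_mul_conjTranspose hψ _ hσ.2

theorem maximally_coherent_iff_SMCS_general
    {d : ℕ} (ρ : Matrix (Fin d) (Fin d) ℂ) (hρ : IsDensityMatrix ρ) :
    (∀ σ : Matrix (Fin d) (Fin d) ℂ, IsDensityMatrix σ →
      ∃ (N : ℕ) (K : Fin N → Matrix (Fin d) (Fin d) ℂ),
        IsIncoherentKraus K ∧ ∑ n, K n * ρ * (K n)ᴴ = σ) ↔ InSMCS ρ := by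
  have := hρ.neZero
  constructor
  · intro h
    obtain ⟨N, K, hK, hKρ⟩ := h _ isDensityMatrix_uniformState
    exact inSMCS_of_sum_eq_uniformState hρ hK hKρ
  · exact fun hS σ hσ => exists_incoherentKraus_of_inSMCS hS hσ

/-- ρ is a maximally coherent state iff ρ ∈ S_MCS. -/
theorem maximally_coherent_iff_SMCS
    {d : ℕ} (hd : 1 ≤ d) (ρ : Matrix (Fin d) (Fin d) ℂ) (hρ : IsDensityMatrix ρ) :
    (∀ σ : Matrix (Fin d) (Fin d) ℂ, IsDensityMatrix σ →
      ∃ (N : ℕ) (K : Fin N → Matrix (Fin d) (Fin d) ℂ),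
        IsIncoherentKraus K ∧ ∑ n, K n * ρ * (K n)ᴴ = σ) ↔ InSMCS ρ :=
  maximally_coherent_iff_SMCS_general ρ hρ
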